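/- arXiv:1601.07615 — 2 statements merged into one kernel-verified Lean document; each statement's English description precedes it below -/
import Mathlib

section
/- Let n ≥ 1, λ ∈ (0,∞) and α₁, α₂ ∈ (0,∞). Then for every Borel measurable function F on ℝ^{n+1}_+ and every x ∈ ℝⁿ, one has N^{α₁}_λ(F)(x) ≤ (1 + α₁/α₂)^λ [ℳ((M_{α₂}(F))^{n/λ})(x)]^{λ/n}. -/
open MeasureTheory ENNReal Metric

noncomputable section

/-- The Hardy–Littlewood maximal operator `ℳ`. -/
def hlMax {n : ℕ} (f : EuclideanSpace ℝ (Fin n) → ℝ≥0∞) (x : EuclideanSpace ℝ (Fin n)) : ℝ≥0∞ :=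
  ⨆ (z : EuclideanSpace ℝ (Fin n)) (r : ℝ) (_ : 0 < r) (_ : x ∈ ball z r),
    (volume (ball z r))⁻¹ * ∫⁻ y in ball z r, f y

/-- The non-tangential maximal function `M_α(F)` with aperture `α` of a function on
`ℝ^(n+1)_+`. -/
def ntMax {n : ℕ} (α : ℝ) (F : EuclideanSpace ℝ (Fin n) × ℝ → ℝ) (x : EuclideanSpace ℝ (Fin n)) : ℝ≥0∞ :=
  ⨆ (y : EuclideanSpace ℝ (Fin n)) (t : ℝ) (_ : 0 < t) (_ : dist y x < α * t), ENNReal.ofReal |F (y, t)|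

/-- The Peetre-type maximal function `N^α_λ(F)`. -/
def peetreMax {n : ℕ} (α lam : ℝ) (F : EuclideanSpace ℝ (Fin n) × ℝ → ℝ) (x : EuclideanSpace ℝ (Fin n)) : ℝ≥0∞ :=
  ⨆ (y : EuclideanSpace ℝ (Fin n)) (t : ℝ) (_ : 0 < t),
    ENNReal.ofReal (|F (y, t)| * (1 + dist x y / (α * t)) ^ (-lam))

/-- pointwise bound of the Peetre-type maximal function by the
Hardy–Littlewood maximal function of the non-tangential maximal function. -/
theorem stmt1 (n : ℕ) (hn : 1 ≤ n) (lam : ℝ) (hlam : 0 < lam)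
    (α₁ α₂ : ℝ) (hα₁ : 0 < α₁) (hα₂ : 0 < α₂)
    (F : EuclideanSpace ℝ (Fin n) × ℝ → ℝ) (hF : Measurable F) (x : EuclideanSpace ℝ (Fin n)) :
    peetreMax α₁ lam F x ≤ ENNReal.ofReal ((1 + α₁ / α₂) ^ lam) *
      (hlMax (fun y => (ntMax α₂ F y) ^ ((n : ℝ) / lam)) x) ^ (lam / (n : ℝ)) := by
  haveI : Nonempty (Fin n) := Fin.pos_iff_nonempty.mp hn
  haveI : Nontrivial (EuclideanSpace ℝ (Fin n)) := inferInstance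
  rw [peetreMax]
  refine iSup_le fun y => iSup_le fun t => iSup_le fun ht => ?_
  have hd0 : (0:ℝ) ≤ dist x y := dist_nonneg
  set d : ℝ := dist x y with hddef
  have hat : 0 < α₂ * t := mul_pos hα₂ ht
  set r : ℝ := d + α₂ * t with hrdef
  have hr : 0 < r := by positivity
  set s : ℝ := α₂ * t / r with hsdef
  have hs : 0 < s := div_pos hat hr
  set c : ℝ≥0∞ := ENNReal.ofReal |F (y, t)| with hcdef
  have hc_ne : c ≠ ⊤ := ENNReal.ofReal_ne_top
  set p : ℝ := (n : ℝ) / lam with hpdef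
  set q : ℝ := lam / (n : ℝ) with hqdef
  have hn0 : (0:ℝ) < (n:ℝ) := by exact_mod_cast hn
  have hp : 0 < p := div_pos hn0 hlam
  have hq : 0 < q := div_pos hlam hn0
  set f : EuclideanSpace ℝ (Fin n) → ℝ≥0∞ := fun z => (ntMax α₂ F z) ^ p with hfdef
  -- pointwise bound on the small ball
  have hpt : ∀ z ∈ ball y (α₂ * t), c ≤ ntMax α₂ F z := by
    intro z hz
    rw [mem_ball] at hz
    rw [ntMax]
    exact le_iSup_of_le y (le_iSup_of_le t (le_iSup_of_le ht
      (le_iSup_of_le (by rwa [dist_comm]) le_rfl)))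
  have hsub : ball y (α₂ * t) ⊆ ball x r := by
    intro z hz
    rw [mem_ball] at hz ⊢
    calc dist z x ≤ dist z y + dist y x := dist_triangle _ _ _
      _ < α₂ * t + d := by rw [dist_comm y x, ← hddef]; linarith
      _ = r := by rw [hrdef]; ring
  have hint : c ^ p * volume (ball y (α₂ * t)) ≤ ∫⁻ z in ball x r, f z := by
    calc c ^ p * volume (ball y (α₂ * t)) = ∫⁻ _ in ball y (α₂ * t), c ^ p :=
          (setLIntegral_const _ _).symm
      _ ≤ ∫⁻ z in ball y (α₂ * t), f z := by
          refine setLIntegral_mono' measurableSet_ball fun z hz => ?_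
          exact ENNReal.rpow_le_rpow (hpt z hz) hp.le
      _ ≤ ∫⁻ z in ball x r, f z := lintegral_mono_set hsub
  have hhl : (volume (ball x r))⁻¹ * ∫⁻ z in ball x r, f z ≤ hlMax f x := by
    rw [hlMax]
    exact le_iSup_of_le x (le_iSup_of_le r (le_iSup_of_le hr
      (le_iSup_of_le (mem_ball_self hr) le_rfl)))
  set V : ℝ≥0∞ := volume (ball (0 : EuclideanSpace ℝ (Fin n)) 1) with hVdef
  have hvol1 : volume (ball x r) = ENNReal.ofReal (r ^ n) * V := by
    rw [hVdef, Measure.addHaar_ball volume x hr.le, finrank_euclideanSpace_fin]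
  have hvol2 : volume (ball y (α₂ * t)) = ENNReal.ofReal ((α₂ * t) ^ n) * V := by
    rw [hVdef, Measure.addHaar_ball volume y hat.le, finrank_euclideanSpace_fin]
  have hvol_ne : volume (ball x r) ≠ 0 := (measure_ball_pos _ _ hr).ne'
  have hvol_top : volume (ball x r) ≠ ⊤ := measure_ball_lt_top.ne
  have hL : ENNReal.ofReal (s ^ n) * c ^ p ≤ hlMax f x := by
    refine le_trans ?_ hhl
    rw [← ENNReal.div_eq_inv_mul, ENNReal.le_div_iff_mul_le (Or.inl hvol_ne) (Or.inl hvol_top)]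
    have hsr : ENNReal.ofReal (s ^ n) * ENNReal.ofReal (r ^ n)
        = ENNReal.ofReal ((α₂ * t) ^ n) := by
      rw [← ENNReal.ofReal_mul (by positivity)]
      congr 1
      rw [hsdef, div_pow, div_mul_cancel₀]
      positivity
    calc ENNReal.ofReal (s ^ n) * c ^ p * volume (ball x r)
        = c ^ p * volume (ball y (α₂ * t)) := by
          rw [hvol1, hvol2, ← hsr]; ring
      _ ≤ ∫⁻ z in ball x r, f z := hint
  -- raise to the power q
  have hpq : p * q = 1 := by
    rw [hpdef, hqdef]; field_simp
  have hnq : (n : ℝ) * q = lam := by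
    rw [hqdef]; field_simp
  have hcp : (c ^ p) ^ q = c := by
    rw [← ENNReal.rpow_mul, hpq, ENNReal.rpow_one]
  have hsnq : (ENNReal.ofReal (s ^ n)) ^ q = ENNReal.ofReal (s ^ lam) := by
    rw [ENNReal.ofReal_pow hs.le, ← ENNReal.rpow_natCast, ← ENNReal.rpow_mul, hnq,
      ENNReal.ofReal_rpow_of_pos hs]
  have hkey : ENNReal.ofReal (s ^ lam) * c ≤ (hlMax f x) ^ q := by
    calc ENNReal.ofReal (s ^ lam) * c
        = (ENNReal.ofReal (s ^ n) * c ^ p) ^ q := by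
          rw [ENNReal.mul_rpow_of_nonneg _ _ hq.le, hcp, hsnq]
      _ ≤ (hlMax f x) ^ q := ENNReal.rpow_le_rpow hL hq.le
  -- real inequality
  have hb1 : (0:ℝ) < 1 + d / (α₁ * t) := by positivity
  have hbase : (1:ℝ) ≤ ((1 + α₁ / α₂) * s) * (1 + d / (α₁ * t)) := by
    have h1 : (1:ℝ) + d / (α₂ * t) ≤ (1 + α₁ / α₂) * (1 + d / (α₁ * t)) := by
      have hexp : (1 + α₁ / α₂) * (1 + d / (α₁ * t))
          = 1 + d / (α₁ * t) + α₁ / α₂ + d / (α₂ * t) := by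
        field_simp
        ring
      rw [hexp]
      have hx1 : (0:ℝ) ≤ d / (α₁ * t) := div_nonneg hd0 (mul_pos hα₁ ht).le
      have hx2 : (0:ℝ) ≤ α₁ / α₂ := div_nonneg hα₁.le hα₂.le
      linarith
    have h2 : ((1:ℝ) + d / (α₂ * t)) * s = 1 := by
      rw [hsdef, hrdef]
      field_simp
      ring
    calc (1:ℝ) = (1 + d / (α₂ * t)) * s := h2.symm
      _ ≤ ((1 + α₁ / α₂) * (1 + d / (α₁ * t))) * s := by
          exact mul_le_mul_of_nonneg_right h1 hs.le
      _ = ((1 + α₁ / α₂) * s) * (1 + d / (α₁ * t)) := by ring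
  have hmain : (1 + d / (α₁ * t)) ^ (-lam) ≤ (1 + α₁ / α₂) ^ lam * s ^ lam := by
    rw [Real.rpow_neg hb1.le, inv_eq_one_div,
      div_le_iff₀ (Real.rpow_pos_of_pos hb1 lam)]
    rw [← Real.mul_rpow (by positivity) hs.le, ← Real.mul_rpow (by positivity) hb1.le]
    exact Real.one_le_rpow hbase hlam.le
  have hreal : |F (y, t)| * (1 + d / (α₁ * t)) ^ (-lam) ≤
      (1 + α₁ / α₂) ^ lam * (s ^ lam * |F (y, t)|) := by
    calc |F (y, t)| * (1 + d / (α₁ * t)) ^ (-lam)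
        ≤ |F (y, t)| * ((1 + α₁ / α₂) ^ lam * s ^ lam) :=
          mul_le_mul_of_nonneg_left hmain (abs_nonneg _)
      _ = (1 + α₁ / α₂) ^ lam * (s ^ lam * |F (y, t)|) := by ring
  calc ENNReal.ofReal (|F (y, t)| * (1 + d / (α₁ * t)) ^ (-lam))
      ≤ ENNReal.ofReal ((1 + α₁ / α₂) ^ lam * (s ^ lam * |F (y, t)|)) :=
        ENNReal.ofReal_le_ofReal hreal
    _ = ENNReal.ofReal ((1 + α₁ / α₂) ^ lam) * (ENNReal.ofReal (s ^ lam) * c) := by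
        rw [ENNReal.ofReal_mul (by positivity), ENNReal.ofReal_mul (by positivity)]
    _ ≤ ENNReal.ofReal ((1 + α₁ / α₂) ^ lam) * (hlMax f x) ^ q := by
        exact mul_le_mul_right hkey _


end
end

section
/- Let n ≥ 1 and let {K_t}_{t>0} satisfy the Gaussian upper bound. Then for all λ, ε, N ∈ (0,∞), every f ∈ L²(ℝⁿ) and every x ∈ ℝⁿ, one has M^{λ,ε,N}_L(f)(x) ≤ [ℳ((f^{∗,ε,N}_{L,∇})^{n/λ})(x)]^{λ/n}. -/
open MeasureTheory ENNReal Metric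

noncomputable section

/-- `e^(-t²L) f (y) = ∫ K_(t²)(y,z) f(z) dz`. -/
def heatOp {n : ℕ} (K : ℝ → EuclideanSpace ℝ (Fin n) → EuclideanSpace ℝ (Fin n) → ℝ) (t : ℝ) (f : EuclideanSpace ℝ (Fin n) → ℝ) (y : EuclideanSpace ℝ (Fin n)) : ℝ :=
  ∫ z, K (t ^ 2) y z * f z

/-- The truncated non-tangential heat maximal function `f^(∗,ε,N)_(L,∇)`. -/
def truncNtHeatMax {n : ℕ} (K : ℝ → EuclideanSpace ℝ (Fin n) → EuclideanSpace ℝ (Fin n) → ℝ) (ε N : ℝ) (f : EuclideanSpace ℝ (Fin n) → ℝ)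
    (x : EuclideanSpace ℝ (Fin n)) : ℝ≥0∞ :=
  ⨆ (t : ℝ) (_ : 0 < t) (_ : t < 1 / ε) (y : EuclideanSpace ℝ (Fin n)) (_ : dist x y < t),
    ENNReal.ofReal (|heatOp K t f y| * t ^ N / ((t + ε) * (1 + ε * ‖y‖)) ^ N)

/-- The truncated Peetre-type heat maximal function `M^(λ,ε,N)_L(f)`. -/
def peetreHeatMax {n : ℕ} (K : ℝ → EuclideanSpace ℝ (Fin n) → EuclideanSpace ℝ (Fin n) → ℝ) (lam ε N : ℝ) (f : EuclideanSpace ℝ (Fin n) → ℝ)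
    (x : EuclideanSpace ℝ (Fin n)) : ℝ≥0∞ :=
  ⨆ (t : ℝ) (_ : 0 < t) (_ : t < 1 / ε) (y : EuclideanSpace ℝ (Fin n)),
    ENNReal.ofReal (|heatOp K t f y| * (1 + dist x y / t) ^ (-lam) * t ^ N /
      ((t + ε) * (1 + ε * ‖y‖)) ^ N)

/-- pointwise bound of `M^(λ,ε,N)_L(f)` by the Hardy–Littlewood maximal
function of the truncated non-tangential heat maximal function. -/
theorem stmt4 (n : ℕ) (hn : 1 ≤ n)
    (K : ℝ → EuclideanSpace ℝ (Fin n) → EuclideanSpace ℝ (Fin n) → ℝ)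
    (hK : ∀ t : ℝ, 0 < t → Measurable fun q : EuclideanSpace ℝ (Fin n) × EuclideanSpace ℝ (Fin n) => K t q.1 q.2)
    (C₀ c : ℝ) (hC₀ : 0 < C₀) (hc : 0 < c)
    (hGauss : ∀ t : ℝ, 0 < t → ∀ᵐ q : EuclideanSpace ℝ (Fin n) × EuclideanSpace ℝ (Fin n) ∂volume,
      |K t q.1 q.2| ≤ C₀ * t ^ (-(n : ℝ) / 2) * Real.exp (-(dist q.1 q.2) ^ 2 / (c * t)))
    (lam ε N : ℝ) (hlam : 0 < lam) (hε : 0 < ε) (hN : 0 < N)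
    (f : EuclideanSpace ℝ (Fin n) → ℝ) (hf : MemLp f 2 volume) (x : EuclideanSpace ℝ (Fin n)) :
    peetreHeatMax K lam ε N f x ≤
      (hlMax (fun y => (truncNtHeatMax K ε N f y) ^ ((n : ℝ) / lam)) x) ^
        (lam / (n : ℝ)) := by
  have hn0 : (0:ℝ) < n := by exact_mod_cast Nat.lt_of_lt_of_le Nat.zero_lt_one hn
  set g : EuclideanSpace ℝ (Fin n) → ℝ≥0∞ :=
    fun y => (truncNtHeatMax K ε N f y) ^ ((n : ℝ) / lam) with hg
  rw [peetreHeatMax]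
  refine iSup_le fun t => iSup_le fun ht => iSup_le fun ht' => iSup_le fun y => ?_
  set d := dist x y with hd
  have hd0 : 0 ≤ d := dist_nonneg
  set r := d + t with hrdef
  have hr : 0 < r := by positivity
  set A := ENNReal.ofReal (|heatOp K t f y| * t ^ N / ((t + ε) * (1 + ε * ‖y‖)) ^ N) with hA
  have hc0 : 0 ≤ (1 + d / t) ^ (-lam) := Real.rpow_nonneg (by positivity) _
  have hterm : ENNReal.ofReal (|heatOp K t f y| * (1 + d / t) ^ (-lam) * t ^ N /
      ((t + ε) * (1 + ε * ‖y‖)) ^ N) = ENNReal.ofReal ((1 + d / t) ^ (-lam)) * A := by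
    rw [hA, ← ENNReal.ofReal_mul hc0]
    congr 1
    ring
  rw [hterm]
  have hAz : ∀ z ∈ ball y t, A ≤ truncNtHeatMax K ε N f z := by
    intro z hz
    unfold truncNtHeatMax
    exact le_iSup_of_le t (le_iSup_of_le ht (le_iSup_of_le ht' (le_iSup_of_le y
      (le_iSup_of_le (mem_ball.mp hz) le_rfl))))
  have hp : (0:ℝ) < (n:ℝ)/lam := by positivity
  have hq : (0:ℝ) ≤ lam/(n:ℝ) := by positivity
  have hint : volume (ball y t) * A ^ ((n:ℝ)/lam) ≤ ∫⁻ z in ball y r, g z := by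
    calc volume (ball y t) * A ^ ((n:ℝ)/lam)
        = ∫⁻ _ in ball y t, A ^ ((n:ℝ)/lam) := by rw [setLIntegral_const, mul_comm]
      _ ≤ ∫⁻ z in ball y t, g z := setLIntegral_mono' measurableSet_ball fun z hz =>
          ENNReal.rpow_le_rpow (hAz z hz) hp.le
      _ ≤ ∫⁻ z in ball y r, g z := lintegral_mono_set (ball_subset_ball (le_add_of_nonneg_left hd0))
  have hxball : x ∈ ball y r := mem_ball.mpr (lt_add_of_pos_right d ht)
  have hhl : (volume (ball y r))⁻¹ * ∫⁻ z in ball y r, g z ≤ hlMax g x := by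
    unfold hlMax
    exact le_iSup_of_le y (le_iSup_of_le r (le_iSup_of_le hr (le_iSup_of_le hxball le_rfl)))
  haveI : Nonempty (Fin n) := ⟨⟨0, hn⟩⟩
  haveI : Nontrivial (EuclideanSpace ℝ (Fin n)) :=
    ⟨0, EuclideanSpace.single ⟨0, hn⟩ 1, fun h => by
      have := congrArg (fun v : EuclideanSpace ℝ (Fin n) => v ⟨0, hn⟩) h
      simp [EuclideanSpace.single_apply] at this⟩
  have hfr : Module.finrank ℝ (EuclideanSpace ℝ (Fin n)) = n := finrank_euclideanSpace_fin
  set V := volume (ball (0:EuclideanSpace ℝ (Fin n)) 1) with hV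
  have hV0 : V ≠ 0 := (measure_ball_pos volume _ one_pos).ne'
  have hVt : V ≠ ⊤ := measure_ball_lt_top.ne
  have hvt : volume (ball y t) = ENNReal.ofReal (t ^ n) * V := by
    rw [Measure.addHaar_ball volume y ht.le, hfr]
  have hvr : volume (ball y r) = ENNReal.ofReal (r ^ n) * V := by
    rw [Measure.addHaar_ball volume y hr.le, hfr]
  have ha0 : ENNReal.ofReal (r ^ n) ≠ 0 := by
    simp only [ne_eq, ENNReal.ofReal_eq_zero, not_le]
    positivity
  have haT : ENNReal.ofReal (r ^ n) ≠ ⊤ := ENNReal.ofReal_ne_top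
  have hQ : (volume (ball y r))⁻¹ * (volume (ball y t) * A ^ ((n:ℝ)/lam))
      = ENNReal.ofReal ((t/r) ^ n) * A ^ ((n:ℝ)/lam) := by
    rw [hvt, hvr, ENNReal.mul_inv (Or.inl ha0) (Or.inl haT)]
    rw [show (ENNReal.ofReal (r^n))⁻¹ * V⁻¹ * (ENNReal.ofReal (t^n) * V * A ^ ((n:ℝ)/lam))
        = (ENNReal.ofReal (t^n) * (ENNReal.ofReal (r^n))⁻¹) * (V * V⁻¹) * A ^ ((n:ℝ)/lam) by ring]
    rw [ENNReal.mul_inv_cancel hV0 hVt, mul_one, ← div_eq_mul_inv,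
      ← ENNReal.ofReal_div_of_pos (by positivity), div_pow]
  have hmain : ENNReal.ofReal ((t/r)^n) * A ^ ((n:ℝ)/lam) ≤ hlMax g x :=
    calc ENNReal.ofReal ((t/r)^n) * A ^ ((n:ℝ)/lam)
        = (volume (ball y r))⁻¹ * (volume (ball y t) * A ^ ((n:ℝ)/lam)) := hQ.symm
      _ ≤ (volume (ball y r))⁻¹ * ∫⁻ z in ball y r, g z := mul_le_mul_right hint _
      _ ≤ hlMax g x := hhl
  refine le_trans ?_ (ENNReal.rpow_le_rpow hmain hq)
  rw [ENNReal.mul_rpow_of_nonneg _ _ hq]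
  have hAeq : (A ^ ((n:ℝ)/lam)) ^ (lam/(n:ℝ)) = A := by
    rw [← ENNReal.rpow_mul]
    rw [show (n:ℝ)/lam * (lam/(n:ℝ)) = 1 by field_simp]
    exact ENNReal.rpow_one A
  rw [hAeq]
  have hB : (ENNReal.ofReal ((t/r)^n)) ^ (lam/(n:ℝ)) = ENNReal.ofReal ((1 + d / t) ^ (-lam)) := by
    have htr : 0 < t / r := div_pos ht hr
    rw [ENNReal.ofReal_pow htr.le, ← ENNReal.rpow_natCast, ← ENNReal.rpow_mul]
    rw [show (n:ℝ) * (lam/(n:ℝ)) = lam by field_simp]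
    rw [ENNReal.ofReal_rpow_of_pos htr]
    congr 1
    have h1 : 1 + d / t = r / t := by
      rw [hrdef]; field_simp; ring
    rw [h1, Real.rpow_neg (by positivity), ← Real.inv_rpow (by positivity), inv_div]
  rw [hB]


end
end
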